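/- Fix r_I, R_p, R_I > 0, μ > 0, d ≥ 0, and points a, b ∈ ℝ² with dist(a, b) = d. Then the closed-form false-alarm probability r_D ↦ P_F(r_D) = 1 − exp(−μ(π r_D² − S_I(d, r_D, R_I) − ∫_{S_o(r_D)} g(x) dx)) is nondecreasing on [0, ∞), and the closed-form miss-detection probability r_D ↦ P_MD(r_D) = (exp(−μ π r_D²) − exp(−μ(π(r_D² + R_I²) − S_I(d, r_D, R_I) + ∫_{S_c(r_I+R_p) \ S_o(r_D)} g(x) dx)))/(1 − exp(−μ(Q + π R_I²))) is nonincreasing on [0, ∞). (This is the paper's claim that, for listen-before-talk, P_F increases and P_MD decreases as the detection range r_D increases.) -/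

import Mathlib

open MeasureTheory Metric Real

/-- `SI d r₁ r₂` is the area (two-dimensional Lebesgue measure) of the intersection of
two closed disks in the plane of radii `r₁` and `r₂` whose centers are at distance `d`. -/
noncomputable def SI (d r₁ r₂ : ℝ) : ℝ :=
  (volume (closedBall (0 : EuclideanSpace ℝ (Fin 2)) r₁ ∩
    closedBall (EuclideanSpace.single (0 : Fin 2) d) r₂)).toReal

/-- Closed-form false-alarm probability of listen-before-talk (Proposition 2, eq. (6)),
as a function of the detection range `r_D`. -/
noncomputable def pF (a b : EuclideanSpace ℝ (Fin 2)) (μ R_p R_I r_I d r_D : ℝ) : ℝ :=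
  1 - Real.exp (-μ * (π * r_D ^ 2 - SI d r_D R_I -
    ∫ x in closedBall a (min r_D (r_I + R_p)) \ closedBall b R_I,
      SI ‖x - a‖ R_p r_I / (π * R_p ^ 2)))

/-- Closed-form miss-detection probability of listen-before-talk (Proposition 2, eq. (7)),
as a function of the detection range `r_D`. -/
noncomputable def pMD (a b : EuclideanSpace ℝ (Fin 2)) (μ R_p R_I r_I d r_D : ℝ) : ℝ :=
  (Real.exp (-μ * (π * r_D ^ 2)) -
    Real.exp (-μ * (π * (r_D ^ 2 + R_I ^ 2) - SI d r_D R_I +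
      ∫ x in (closedBall a (r_I + R_p) \ closedBall b R_I) \
              (closedBall a (min r_D (r_I + R_p)) \ closedBall b R_I),
        SI ‖x - a‖ R_p r_I / (π * R_p ^ 2)))) /
  (1 - Real.exp (-μ * ((∫ x in closedBall a (r_I + R_p) \ closedBall b R_I,
      SI ‖x - a‖ R_p r_I / (π * R_p ^ 2)) + π * R_I ^ 2)))

/-! For `r ≥ 0`, `π r² - S_I(d, r, R_I)` is the area of `S_c(r)` and
`S_o(r) = S_c(r) ∩ D(a, r_I + R_p)`, so the exponent of `P_F` is the integral over `S_c(r)` of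
`1 - 1_{D(a, r_I + R_p)} g`; this integrand is nonnegative because `g ≤ 1`, so the integral grows
with `r`. The numerator of `P_MD` factors as `exp(-μπr²) (1 - exp(-μ C(r)))` with
`C(r) = π R_I² - S_I(d, r, R_I) + ∫_{S_c(r_I+R_p) \ S_o(r)} g`, which is nonnegative and
nonincreasing because `S_I(d, r, R_I) ≤ π R_I²` grows with `r` and `g ≥ 0`; the denominator is a
positive constant. -/

local notation "E2" => EuclideanSpace ℝ (Fin 2)

lemma measureReal_closedBall_fin_two (x : E2) {r : ℝ} (hr : 0 ≤ r) :
    volume.real (closedBall x r) = π * r ^ 2 := by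
  simp [Measure.real, ENNReal.toReal_ofReal hr, pi_nonneg, mul_comm]

lemma measureReal_closedBall_fin_two_le (x : E2) (r : ℝ) :
    volume.real (closedBall x r) ≤ π * r ^ 2 := by
  rcases le_or_gt 0 r with hr | hr
  · exact (measureReal_closedBall_fin_two x hr).le
  · rw [closedBall_eq_empty.2 hr, measureReal_empty]
    positivity

lemma SI_nonneg (d r₁ r₂ : ℝ) : 0 ≤ SI d r₁ r₂ := measureReal_nonneg

lemma SI_le_left (d r₁ r₂ : ℝ) : SI d r₁ r₂ ≤ π * r₁ ^ 2 :=
  (measureReal_mono Set.inter_subset_left measure_closedBall_lt_top.ne).trans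
    (measureReal_closedBall_fin_two_le _ _)

lemma SI_le_right (d r₁ r₂ : ℝ) : SI d r₁ r₂ ≤ π * r₂ ^ 2 :=
  (measureReal_mono Set.inter_subset_right measure_closedBall_lt_top.ne).trans
    (measureReal_closedBall_fin_two_le _ _)

lemma SI_mono_left (d r₂ : ℝ) : Monotone fun r₁ => SI d r₁ r₂ := fun _ _ h =>
  measureReal_mono (Set.inter_subset_inter_left _ (closedBall_subset_closedBall h))
    (measure_ne_top_of_subset Set.inter_subset_left measure_closedBall_lt_top.ne)

lemma SI_dist (a b : E2) (r₁ r₂ : ℝ) :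
    SI (dist a b) r₁ r₂ = volume.real (closedBall a r₁ ∩ closedBall b r₂) := by
  set w : E2 := EuclideanSpace.single 0 (dist a b)
  have hw : ‖b - a‖ = ‖w‖ := by simp [w, dist_eq_norm', norm_sub_rev]
  let L : E2 ≃ₗᵢ[ℝ] E2 := Submodule.reflection (ℝ ∙ ((b - a) - w))ᗮ
  let f : E2 → E2 := fun x => L (x - a)
  have hf : Isometry f := L.isometry.comp (Isometry.of_dist_eq fun x y => dist_sub_right x y a)
  have hmp : MeasurePreserving f volume volume :=
    L.measurePreserving.comp (measurePreserving_sub_right volume a)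
  have hfa : f a = 0 := by simp [f]
  have hfb : f b = w := Submodule.reflection_sub hw
  have hpre : f ⁻¹' (closedBall 0 r₁ ∩ closedBall w r₂) = closedBall a r₁ ∩ closedBall b r₂ := by
    rw [Set.preimage_inter, ← hfa, ← hfb, hf.preimage_closedBall, hf.preimage_closedBall]
  rw [SI, ← Measure.real, ← hpre, hmp.measureReal_preimage
    (measurableSet_closedBall.inter measurableSet_closedBall).nullMeasurableSet]

lemma pi_mul_sq_sub_SI_dist (a b : E2) {r : ℝ} (hr : 0 ≤ r) (R : ℝ) :
    π * r ^ 2 - SI (dist a b) r R = volume.real (closedBall a r \ closedBall b R) := by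
  rw [SI_dist, ← measureReal_closedBall_fin_two a hr,
    ← measureReal_sdiff_add_inter measurableSet_closedBall measure_closedBall_lt_top.ne]
  ring

lemma measurable_SI (r₁ r₂ : ℝ) : Measurable fun d => SI d r₁ r₂ := by
  have hS : MeasurableSet {p : E2 × E2 | dist p.2 0 ≤ r₁ ∧ dist p.2 p.1 ≤ r₂} :=
    (measurableSet_le (continuous_snd.dist continuous_const).measurable measurable_const).inter
      (measurableSet_le (continuous_snd.dist continuous_fst).measurable measurable_const)
  have hsingle : Continuous fun d : ℝ => EuclideanSpace.single (0 : Fin 2) d :=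
    (Isometry.of_dist_eq fun d d' =>
      PiLp.dist_single_same 2 (fun _ : Fin 2 => ℝ) 0 d d').continuous
  exact ((measurable_measure_prodMk_left hS).comp hsingle.measurable).ennreal_toReal

theorem MeasureTheory.measureReal_sub_setIntegral_mono {α : Type*} [MeasurableSpace α]
    {μ : Measure α} {f : α → ℝ} {s t : Set α} (hst : s ⊆ t) (ht : μ t ≠ ⊤)
    (hf : IntegrableOn f t μ) (hf1 : ∀ᵐ x ∂μ.restrict t, f x ≤ 1) :
    μ.real s - ∫ x in s, f x ∂μ ≤ μ.real t - ∫ x in t, f x ∂μ := by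
  have hrepr : ∀ u ⊆ t, μ.real u - ∫ x in u, f x ∂μ = ∫ x in u, (1 - f x) ∂μ := fun u hu => by
    have h1 : IntegrableOn (fun _ => (1 : ℝ)) u μ :=
      integrableOn_const (measure_ne_top_of_subset hu ht)
    rw [integral_sub h1 (hf.mono_set hu), setIntegral_const, smul_eq_mul, mul_one]
  rw [hrepr s hst, hrepr t subset_rfl]
  exact setIntegral_mono_set ((integrableOn_const ht).sub hf)
    (hf1.mono fun x hx => sub_nonneg.2 hx) hst.eventuallyLE

lemma antitoneOn_exp_sub_exp {s : Set ℝ} {f C : ℝ → ℝ} {μ : ℝ} (hμ : 0 ≤ μ)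
    (hf : MonotoneOn f s) (hC : AntitoneOn C s) (hC0 : ∀ x ∈ s, 0 ≤ C x) :
    AntitoneOn (fun x => exp (-μ * f x) - exp (-μ * (f x + C x))) s := by
  intro x hx y hy hxy
  have hfactor : ∀ z, exp (-μ * f z) - exp (-μ * (f z + C z))
      = exp (-μ * f z) * (1 - exp (-μ * C z)) := fun z => by
    rw [mul_add, exp_add]; ring
  simp only [hfactor]
  have hμ' : -μ ≤ 0 := neg_nonpos.2 hμ
  refine mul_le_mul (exp_le_exp.2 (mul_le_mul_of_nonpos_left (hf hx hy hxy) hμ'))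
    (sub_le_sub_left (exp_le_exp.2 (mul_le_mul_of_nonpos_left (hC hx hy hxy) hμ')) 1)
    (sub_nonneg.2 (exp_le_one_iff.2 (mul_nonpos_of_nonpos_of_nonneg hμ' (hC0 y hy))))
    (exp_nonneg _)

section DetectionRange

variable (a b : E2) (R_I T : ℝ) {g : E2 → ℝ}

lemma closedBall_sdiff_inter_closedBall (r : ℝ) :
    (closedBall a r \ closedBall b R_I) ∩ closedBall a T
      = closedBall a (min r T) \ closedBall b R_I := by
  ext x
  simp only [Set.mem_inter_iff, Set.mem_sdiff, mem_closedBall, le_min_iff]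
  tauto

lemma monotoneOn_pi_mul_sq_sub_SI_sub_setIntegral (hg : LocallyIntegrable g)
    (hg1 : ∀ x, g x ≤ 1) :
    MonotoneOn (fun r => π * r ^ 2 - SI (dist a b) r R_I -
      ∫ x in closedBall a (min r T) \ closedBall b R_I, g x) (Set.Ici 0) := by
  have hrepr : ∀ r, 0 ≤ r → π * r ^ 2 - SI (dist a b) r R_I -
      ∫ x in closedBall a (min r T) \ closedBall b R_I, g x
      = volume.real (closedBall a r \ closedBall b R_I) -
        ∫ x in closedBall a r \ closedBall b R_I, (closedBall a T).indicator g x := fun r hr => by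
    rw [pi_mul_sq_sub_SI_dist a b hr, setIntegral_indicator measurableSet_closedBall,
      closedBall_sdiff_inter_closedBall]
  intro r hr r' hr' hrr
  simp only [hrepr r hr, hrepr r' hr']
  have hfin : volume (closedBall a r' \ closedBall b R_I) ≠ ⊤ :=
    measure_ne_top_of_subset Set.sdiff_subset measure_closedBall_lt_top.ne
  refine measureReal_sub_setIntegral_mono
    (Set.sdiff_subset_sdiff_left (closedBall_subset_closedBall hrr)) hfin ?_
    (ae_of_all _ fun x => Set.indicator_apply_le' (fun _ => hg1 x) (fun _ => zero_le_one))
  exact ((hg.integrableOn_isCompact (isCompact_closedBall a r')).mono_set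
    Set.sdiff_subset).indicator measurableSet_closedBall

lemma antitone_pi_mul_sq_sub_SI_add_setIntegral (hg : LocallyIntegrable g)
    (hg0 : ∀ x, 0 ≤ g x) :
    Antitone (fun r => π * R_I ^ 2 - SI (dist a b) r R_I +
      ∫ x in (closedBall a T \ closedBall b R_I) \ (closedBall a (min r T) \ closedBall b R_I),
        g x) := by
  intro r r' hrr
  have hSI := SI_mono_left (dist a b) R_I hrr
  have hJ : (∫ x in (closedBall a T \ closedBall b R_I) \
        (closedBall a (min r' T) \ closedBall b R_I), g x) ≤
      ∫ x in (closedBall a T \ closedBall b R_I) \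
        (closedBall a (min r T) \ closedBall b R_I), g x :=
    setIntegral_mono_set
      ((hg.integrableOn_isCompact (isCompact_closedBall a T)).mono_set
        (Set.sdiff_subset.trans Set.sdiff_subset))
      (ae_of_all _ hg0)
      (Set.sdiff_subset_sdiff_right (Set.sdiff_subset_sdiff_left
        (closedBall_subset_closedBall (min_le_min_right T hrr)))).eventuallyLE
  linarith

lemma pi_mul_sq_sub_SI_add_setIntegral_nonneg (hg0 : ∀ x, 0 ≤ g x) (r : ℝ) :
    0 ≤ π * R_I ^ 2 - SI (dist a b) r R_I +
      ∫ x in (closedBall a T \ closedBall b R_I) \ (closedBall a (min r T) \ closedBall b R_I),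
        g x := by
  have hSI := SI_le_right (dist a b) r R_I
  have hJ := integral_nonneg (f := g) (μ := volume.restrict ((closedBall a T \ closedBall b R_I) \
    (closedBall a (min r T) \ closedBall b R_I))) hg0
  linarith

end DetectionRange

lemma SI_div_pi_mul_sq_le_one (d r₁ r₂ : ℝ) : SI d r₁ r₂ / (π * r₁ ^ 2) ≤ 1 :=
  div_le_one_of_le₀ (SI_le_left d r₁ r₂) (by positivity)

lemma locallyIntegrable_SI_norm_sub_div (a : E2) (R_p r_I : ℝ) :
    LocallyIntegrable fun x : E2 => SI ‖x - a‖ R_p r_I / (π * R_p ^ 2) := by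
  have hm : Measurable fun x : E2 => SI ‖x - a‖ R_p r_I / (π * R_p ^ 2) :=
    ((measurable_SI R_p r_I).comp (continuous_id.sub continuous_const).norm.measurable).div_const _
  refine (memLp_top_of_bound hm.aestronglyMeasurable 1 (ae_of_all _ fun x => ?_)).locallyIntegrable
    le_top
  rw [Real.norm_of_nonneg (div_nonneg (SI_nonneg _ _ _) (by positivity))]
  exact SI_div_pi_mul_sq_le_one _ _ _

lemma monotoneOn_pF (a b : E2) (μ R_p R_I r_I : ℝ) (hμ : 0 ≤ μ) :
    MonotoneOn (fun r_D => pF a b μ R_p R_I r_I (dist a b) r_D) (Set.Ici 0) := by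
  intro r hr r' hr' hrr
  have hA := monotoneOn_pi_mul_sq_sub_SI_sub_setIntegral a b R_I (r_I + R_p)
    (locallyIntegrable_SI_norm_sub_div a R_p r_I) (fun _ => SI_div_pi_mul_sq_le_one _ _ _)
    hr hr' hrr
  simp only [pF]
  exact sub_le_sub_left (exp_le_exp.2 (mul_le_mul_of_nonpos_left hA (neg_nonpos.2 hμ))) 1

lemma antitoneOn_pMD (a b : E2) (μ R_p R_I r_I : ℝ) (hμ : 0 < μ) (hRI : R_I ≠ 0) :
    AntitoneOn (fun r_D => pMD a b μ R_p R_I r_I (dist a b) r_D) (Set.Ici 0) := by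
  have hg0 : ∀ x : E2, 0 ≤ SI ‖x - a‖ R_p r_I / (π * R_p ^ 2) :=
    fun _ => div_nonneg (SI_nonneg _ _ _) (by positivity)
  have hgi := locallyIntegrable_SI_norm_sub_div a R_p r_I
  have hQ : 0 ≤ ∫ x in closedBall a (r_I + R_p) \ closedBall b R_I,
      SI ‖x - a‖ R_p r_I / (π * R_p ^ 2) := integral_nonneg hg0
  have hD : 0 < 1 - exp (-μ * ((∫ x in closedBall a (r_I + R_p) \ closedBall b R_I,
      SI ‖x - a‖ R_p r_I / (π * R_p ^ 2)) + π * R_I ^ 2)) :=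
    sub_pos.2 (exp_lt_one_iff.2 (mul_neg_of_neg_of_pos (neg_neg_of_pos hμ)
      (add_pos_of_nonneg_of_pos hQ (by positivity))))
  have hnum := antitoneOn_exp_sub_exp hμ.le (f := fun r => π * r ^ 2)
    (fun r hr _ _ hrr => mul_le_mul_of_nonneg_left (pow_le_pow_left₀ hr hrr 2) pi_nonneg)
    ((antitone_pi_mul_sq_sub_SI_add_setIntegral a b R_I (r_I + R_p) hgi hg0).antitoneOn _)
    (fun r _ => pi_mul_sq_sub_SI_add_setIntegral_nonneg a b R_I (r_I + R_p) hg0 r)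
  intro r hr r' hr' hrr
  refine div_le_div_of_nonneg_right ?_ hD.le
  convert hnum hr hr' hrr using 4 <;> ring

theorem pF_mono_pMD_anti_in_rD_general (r_I R_p R_I μ d : ℝ)
    (hRI : 0 < R_I) (hμ : 0 < μ)
    (a b : EuclideanSpace ℝ (Fin 2)) (hab : dist a b = d) :
    MonotoneOn (fun r_D => pF a b μ R_p R_I r_I d r_D) (Set.Ici (0:ℝ)) ∧
    AntitoneOn (fun r_D => pMD a b μ R_p R_I r_I d r_D) (Set.Ici (0:ℝ)) := by
  subst hab
  exact ⟨monotoneOn_pF a b μ R_p R_I r_I hμ.le, antitoneOn_pMD a b μ R_p R_I r_I hμ hRI.ne'⟩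

/-- For listen-before-talk, the closed-form `P_F` is nondecreasing and the closed-form
`P_MD` is nonincreasing in the detection range `r_D` on `[0, ∞)`. -/
theorem pF_mono_pMD_anti_in_rD (r_I R_p R_I μ d : ℝ)
    (hrI : 0 < r_I) (hRp : 0 < R_p) (hRI : 0 < R_I) (hμ : 0 < μ) (hd : 0 ≤ d)
    (a b : EuclideanSpace ℝ (Fin 2)) (hab : dist a b = d) :
    MonotoneOn (fun r_D => pF a b μ R_p R_I r_I d r_D) (Set.Ici (0:ℝ)) ∧
    AntitoneOn (fun r_D => pMD a b μ R_p R_I r_I d r_D) (Set.Ici (0:ℝ)) :=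
  pF_mono_pMD_anti_in_rD_general r_I R_p R_I μ d hRI hμ a b hab
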